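/- arXiv:2203.13765 — 3 statements merged into one kernel-verified Lean document; each statement's English description precedes it below -/
import Mathlib

section
/- Let s be a natural number. For every n divisible by 2s+4 there exists a simple graph G on n vertices with exactly (2s+3)n/2 edges together with a proper edge coloring of G containing no rainbow copy of DS_{1,2s+1}; moreover, for every n, every simple graph on n vertices with more than (2s+3)n/2 edges has the property that every proper edge coloring contains a rainbow copy of DS_{1,2s+1}. (In other words, ex⋆(n, DS_{1,2s+1}) = (2s+3)n/2 + o(1).) -/
open SimpleGraph

/-- A proper edge coloring of `G`: edges sharing a vertex receive distinct colors. -/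
def IsProperEdgeColoring {V : Type*} (G : SimpleGraph V) (c : Sym2 V → ℕ) : Prop :=
  ∀ e₁ ∈ G.edgeSet, ∀ e₂ ∈ G.edgeSet,
    e₁ ≠ e₂ → (∃ v, v ∈ e₁ ∧ v ∈ e₂) → c e₁ ≠ c e₂

/-- The set of uniquely colored edges of `F` under the coloring `c`. -/
def uniqueEdges {V : Type*} (F : SimpleGraph V) (c : Sym2 V → ℕ) : Set (Sym2 V) :=
  {e | e ∈ F.edgeSet ∧ ∀ e' ∈ F.edgeSet, c e' = c e → e' = e}

/-- `Spec F` : the set of `k` such that `F` admits a proper edge coloring with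
exactly `k` uniquely colored edges. -/
def Spec {V : Type*} (F : SimpleGraph V) : Set ℕ :=
  {k | ∃ c : Sym2 V → ℕ, IsProperEdgeColoring F c ∧ (uniqueEdges F c).ncard = k}

/-- `f` realizes a copy of `H` inside `G`. -/
def IsCopy {W V : Type*} (H : SimpleGraph W) (G : SimpleGraph V) (f : W → V) : Prop :=
  Function.Injective f ∧ ∀ a b, H.Adj a b → G.Adj (f a) (f b)

/-- Number of uniquely colored edges of the copy of `H` given by `f`. -/
noncomputable def copyUniqueCount {W V : Type*} (H : SimpleGraph W) (c : Sym2 V → ℕ)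
    (f : W → V) : ℕ :=
  {e | e ∈ H.edgeSet ∧ ∀ e' ∈ H.edgeSet, c (e'.map f) = c (e.map f) → e' = e}.ncard

def ContainsKUniqueCopy {W V : Type*} (H : SimpleGraph W) (G : SimpleGraph V)
    (c : Sym2 V → ℕ) (k : ℕ) : Prop :=
  ∃ f : W → V, IsCopy H G f ∧ k ≤ copyUniqueCount H c f

def ContainsExactlyKUniqueCopy {W V : Type*} (H : SimpleGraph W) (G : SimpleGraph V)
    (c : Sym2 V → ℕ) (k : ℕ) : Prop :=
  ∃ f : W → V, IsCopy H G f ∧ copyUniqueCount H c f = k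

def ContainsRainbowCopy {W V : Type*} (H : SimpleGraph W) (G : SimpleGraph V)
    (c : Sym2 V → ℕ) : Prop :=
  ∃ f : W → V, IsCopy H G f ∧
    ∀ e₁ ∈ H.edgeSet, ∀ e₂ ∈ H.edgeSet, e₁ ≠ e₂ → c (e₁.map f) ≠ c (e₂.map f)

/-- The double star `DS_{a,b}`: a dominating edge `y x` with `a` pendant leaves at `y`
and `b` pendant leaves at `x`. -/
def doubleStar (a b : ℕ) : SimpleGraph (Fin 2 ⊕ Fin a ⊕ Fin b) :=
  SimpleGraph.fromEdgeSet
    ({s(Sum.inl 0, Sum.inl 1)} ∪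
     {e | ∃ i : Fin a, e = s(Sum.inl 0, Sum.inr (Sum.inl i))} ∪
     {e | ∃ j : Fin b, e = s(Sum.inl 1, Sum.inr (Sum.inr j))})

/-- The caterpillar `C_{a,b,c}`: a path `x₁x₂x₃` with `a`, `b`, `c` pendant leaves
attached at `x₁`, `x₂`, `x₃` respectively. -/
def caterpillar3 (a b c : ℕ) : SimpleGraph (Fin 3 ⊕ Fin a ⊕ Fin b ⊕ Fin c) :=
  SimpleGraph.fromEdgeSet
    ({s(Sum.inl 0, Sum.inl 1), s(Sum.inl 1, Sum.inl 2)} ∪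
     {e | ∃ i : Fin a, e = s(Sum.inl 0, Sum.inr (Sum.inl i))} ∪
     {e | ∃ i : Fin b, e = s(Sum.inl 1, Sum.inr (Sum.inr (Sum.inl i)))} ∪
     {e | ∃ i : Fin c, e = s(Sum.inl 2, Sum.inr (Sum.inr (Sum.inr i)))})

/-- The rooted tree of depth 2 whose root has `k` children, each with `m` pendant
leaves. -/
def depth2Tree (k m : ℕ) : SimpleGraph (Unit ⊕ Fin k ⊕ Fin k × Fin m) :=
  SimpleGraph.fromEdgeSet
    ({e | ∃ i : Fin k, e = s(Sum.inl (), Sum.inr (Sum.inl i))} ∪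
     {e | ∃ (i : Fin k) (j : Fin m),
        e = s(Sum.inr (Sum.inl i), Sum.inr (Sum.inr (i, j)))})

/-!
If `2|E| > (2s+3)n`, a discharging argument gives an edge `XY` with `deg X ≥ 2s+4` and
`deg Y ≥ 2`. Pick a neighbour `Z ≠ X` of `Y`; among the neighbours of `X`, discarding `Y`, `Z`
and the at most one `w` with `c(Xw) = c(YZ)` leaves `2s+1` leaves, and properness makes the
resulting `DS_{1,2s+1}` rainbow.

Conversely, take disjoint copies of `K_{2s+4}`, each properly coloured with `2s+3` colours. In a
rainbow `DS_{1,2s+1}` with central edge `YX` and leaf `Z` at `Y`, the vertices `Y`, `Z` and the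
leaves at `X` are `2s+3` neighbours of `X`, so every colour, in particular `c(YZ)`, appears on an
edge at `X`; this contradicts either properness or rainbowness.
-/

open Finset

theorem isProperEdgeColoring_iff {V : Type*} {G : SimpleGraph V} {c : Sym2 V → ℕ} :
    IsProperEdgeColoring G c ↔
      ∀ v a b, G.Adj v a → G.Adj v b → a ≠ b → c s(v, a) ≠ c s(v, b) := by
  refine ⟨fun h v a b hva hvb hab => h _ hva _ hvb ?_ ⟨v, by simp, by simp⟩, fun h => ?_⟩
  · rw [Ne, Sym2.eq_iff]
    rintro (⟨-, rfl⟩ | ⟨rfl, -⟩)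
    exacts [hab rfl, hvb.ne rfl]
  rintro e₁ he₁ e₂ he₂ hne ⟨v, hv₁, hv₂⟩
  obtain ⟨a, rfl⟩ := Sym2.mem_iff_exists.1 hv₁
  obtain ⟨b, rfl⟩ := Sym2.mem_iff_exists.1 hv₂
  exact h v a b he₁ he₂ (by rintro rfl; exact hne rfl)

theorem isCopy_iff_forall_map_mem_edgeSet {W V : Type*} {H : SimpleGraph W} {G : SimpleGraph V}
    {f : W → V} :
    IsCopy H G f ↔ Function.Injective f ∧ ∀ e ∈ H.edgeSet, e.map f ∈ G.edgeSet := by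
  refine and_congr_right fun _ => ⟨fun h e he => ?_, fun h a b hab => h s(a, b) hab⟩
  induction e using Sym2.ind with
  | h a b => exact h a b he

theorem doubleStar_edgeSet (a b : ℕ) :
    (doubleStar a b).edgeSet =
      {s(Sum.inl 0, Sum.inl 1)} ∪
      {e | ∃ i : Fin a, e = s(Sum.inl 0, Sum.inr (Sum.inl i))} ∪
      {e | ∃ j : Fin b, e = s(Sum.inl 1, Sum.inr (Sum.inr j))} := by
  rw [doubleStar, edgeSet_fromEdgeSet, sdiff_eq_left, Set.disjoint_left]
  rintro _ ((rfl | ⟨i, rfl⟩) | ⟨j, rfl⟩) <;> simp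

section

variable {a b : ℕ}

theorem doubleStar_adj_inl_zero_inl_one : (doubleStar a b).Adj (.inl 0) (.inl 1) := by
  simp [← mem_edgeSet, doubleStar_edgeSet]

theorem doubleStar_adj_inl_zero_inr_inl (i : Fin a) :
    (doubleStar a b).Adj (.inl 0) (.inr (.inl i)) := by
  simp [← mem_edgeSet, doubleStar_edgeSet]

theorem doubleStar_adj_inl_one_inr_inr (j : Fin b) :
    (doubleStar a b).Adj (.inl 1) (.inr (.inr j)) := by
  simp [← mem_edgeSet, doubleStar_edgeSet]

end

section RainbowDoubleStar

variable {V : Type*} {G : SimpleGraph V} {c : Sym2 V → ℕ} {b : ℕ}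

theorem containsRainbowCopy_doubleStar_one_iff (hc : IsProperEdgeColoring G c) :
    ContainsRainbowCopy (doubleStar 1 b) G c ↔
      ∃ (X Y Z : V) (L : Fin b ↪ V), G.Adj X Y ∧ G.Adj Y Z ∧ Z ≠ X ∧
        ∀ j, G.Adj X (L j) ∧ L j ≠ Y ∧ L j ≠ Z ∧ c s(X, L j) ≠ c s(Y, Z) := by
  have hsep := isProperEdgeColoring_iff.1 hc
  constructor
  · rintro ⟨f, ⟨hinj, hadj⟩, hrainbow⟩
    refine ⟨f (.inl 1), f (.inl 0), f (.inr (.inl 0)), ⟨f ∘ .inr ∘ .inr, ?_⟩,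
      (hadj _ _ doubleStar_adj_inl_zero_inl_one).symm,
      hadj _ _ (doubleStar_adj_inl_zero_inr_inl 0), hinj.ne (by simp),
      fun j => ⟨hadj _ _ (doubleStar_adj_inl_one_inr_inr j), hinj.ne (by simp),
        hinj.ne (by simp), ?_⟩⟩
    · exact hinj.comp (Sum.inr_injective.comp Sum.inr_injective)
    · simpa using hrainbow s(.inl 1, .inr (.inr j)) (doubleStar_adj_inl_one_inr_inr j)
        s(.inl 0, .inr (.inl 0)) (doubleStar_adj_inl_zero_inr_inl 0) (by simp)
  · rintro ⟨X, Y, Z, L, hXY, hYZ, hZX, hL⟩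
    refine ⟨Sum.elim ![Y, X] (Sum.elim (fun _ => Z) L), ?_, ?_⟩
    · rw [isCopy_iff_forall_map_mem_edgeSet, doubleStar_edgeSet]
      refine ⟨?_, ?_⟩
      · refine Function.Injective.sumElim ?_ (Function.Injective.sumElim
          (fun _ _ _ => Subsingleton.elim _ _) L.injective fun _ j => (hL j).2.2.1.symm) ?_
        · intro i i' h
          fin_cases i <;> fin_cases i' <;> simp_all [hXY.ne]
        · rintro i (_ | j) <;> fin_cases i <;>
            simp [hYZ.ne, hZX.symm, (hL _).2.1.symm, (hL _).1.ne]
      · rintro _ ((rfl | ⟨i, rfl⟩) | ⟨j, rfl⟩) <;> simp [hXY.symm, hYZ, (hL _).1]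
    · rintro e₁ he₁ e₂ he₂ hne
      rw [doubleStar_edgeSet] at he₁ he₂
      have hYX_YZ : c s(Y, X) ≠ c s(Y, Z) := hsep Y X Z hXY.symm hYZ hZX.symm
      have hYX_XL j : c s(Y, X) ≠ c s(X, L j) := by
        rw [Sym2.eq_swap]; exact hsep X Y (L j) hXY (hL j).1 (hL j).2.1.symm
      rcases he₁ with (rfl | ⟨i, rfl⟩) | ⟨j, rfl⟩ <;>
        rcases he₂ with (rfl | ⟨i', rfl⟩) | ⟨j', rfl⟩ <;>
        simp only [Sym2.map_mk, Sum.elim_inl, Sum.elim_inr, Matrix.cons_val_zero,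
          Matrix.cons_val_one, Matrix.cons_val_fin_one]
      exacts [absurd rfl hne, hYX_YZ, hYX_XL _, hYX_YZ.symm,
        absurd (by rw [Subsingleton.elim i i']) hne, (hL _).2.2.2.symm, (hYX_XL _).symm,
        (hL _).2.2.2, hsep X _ _ (hL _).1 (hL _).1 (L.injective.ne fun h => hne (by rw [h]))]

theorem not_containsRainbowCopy_doubleStar_one (hc : IsProperEdgeColoring G c)
    (hcol : ∀ e ∈ G.edgeSet, c e < b + 2)
    (htrans : ∀ x y z, G.Adj x y → G.Adj y z → x ≠ z → G.Adj x z) :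
    ¬ ContainsRainbowCopy (doubleStar 1 b) G c := by
  classical
  have hsep := isProperEdgeColoring_iff.1 hc
  rw [containsRainbowCopy_doubleStar_one_iff hc]
  rintro ⟨X, Y, Z, L, hXY, hYZ, hZX, hL⟩
  have hXZ : G.Adj X Z := htrans X Y Z hXY hYZ hZX.symm
  set S := insert Y (insert Z (univ.map L))
  have hS : ∀ w ∈ S, G.Adj X w := by
    simp only [S, mem_insert, mem_map, mem_univ, true_and]
    rintro w (rfl | rfl | ⟨j, rfl⟩)
    exacts [hXY, hXZ, (hL j).1]
  have hScard : S.card = b + 2 := by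
    rw [card_insert_of_notMem, card_insert_of_notMem] <;>
      simp [hYZ.ne, fun j => (hL j).2.1, fun j => (hL j).2.2.1]
  -- the `b + 2` edges at `X` carry distinct colours below `b + 2`, so they use every colour
  have himage : S.image (fun w => c s(X, w)) = range (b + 2) := by
    refine eq_of_subset_of_card_le (fun _ h => ?_) ?_
    · obtain ⟨w, hw, rfl⟩ := mem_image.1 h
      exact mem_range.2 (hcol _ (hS w hw))
    · rw [card_range, card_image_of_injOn, hScard]
      exact fun w hw w' hw' => not_imp_not.1 (hsep X w w' (hS w hw) (hS w' hw'))
  obtain ⟨w, hw, hcw⟩ : ∃ w ∈ S, c s(X, w) = c s(Y, Z) := by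
    rw [← mem_image, himage, mem_range]; exact hcol _ hYZ
  simp only [S, mem_insert, mem_map, mem_univ, true_and] at hw
  rcases hw with rfl | rfl | ⟨j, -, rfl⟩
  · exact hsep w X Z hXY.symm hYZ hZX.symm (by rw [Sym2.eq_swap]; exact hcw)
  · exact hsep w X Y hXZ.symm hYZ.symm hXY.ne (by rw [Sym2.eq_swap, hcw, Sym2.eq_swap])
  · exact (hL j).2.2.2 hcw

theorem containsRainbowCopy_doubleStar_one_of_adj [Fintype V] [DecidableRel G.Adj]
    (hc : IsProperEdgeColoring G c) {X Y : V} (hXY : G.Adj X Y) (hX : b + 3 ≤ G.degree X)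
    (hY : 2 ≤ G.degree Y) : ContainsRainbowCopy (doubleStar 1 b) G c := by
  classical
  have hsep := isProperEdgeColoring_iff.1 hc
  obtain ⟨Z, hZ⟩ : ((G.neighborFinset Y).erase X).Nonempty := by
    rw [← card_pos, card_erase_of_mem (by simpa using hXY.symm), card_neighborFinset_eq_degree]
    omega
  rw [mem_erase, mem_neighborFinset] at hZ
  set bad := (G.neighborFinset X).filter fun w => c s(X, w) = c s(Y, Z)
  have hbad : bad.card ≤ 1 := card_le_one.2 fun w hw w' hw' => by
    simp only [bad, mem_filter, mem_neighborFinset] at hw hw'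
    exact not_imp_not.1 (hsep X w w' hw.1 hw'.1) (hw.2.trans hw'.2.symm)
  have hgood : b ≤ (((G.neighborFinset X).erase Y).erase Z \ bad).card := by
    have h₁ := pred_card_le_card_erase (s := G.neighborFinset X) (a := Y)
    have h₂ := pred_card_le_card_erase (s := (G.neighborFinset X).erase Y) (a := Z)
    have h₃ := le_card_sdiff bad (((G.neighborFinset X).erase Y).erase Z)
    rw [card_neighborFinset_eq_degree] at h₁
    omega
  obtain ⟨L, hL⟩ := Function.Embedding.exists_of_card_le_finset (α := Fin b)
    (by rwa [Fintype.card_fin])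
  rw [containsRainbowCopy_doubleStar_one_iff hc]
  refine ⟨X, Y, Z, L, hXY, hZ.2, hZ.1, fun j => ?_⟩
  have hj := hL (Set.mem_range_self j)
  simp only [bad, Finset.mem_coe, mem_sdiff, mem_erase, mem_filter, mem_neighborFinset] at hj
  exact ⟨hj.1.2.2, hj.1.2.1, hj.1.1, fun h => hj.2 ⟨hj.1.2.2, h⟩⟩

end RainbowDoubleStar

section Discharging

variable {V : Type*} [Fintype V] {G : SimpleGraph V} [DecidableRel G.Adj]

theorem sum_sum_neighborFinset_eq_sum_degrees {w : V → V → ℕ}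
    (hw : ∀ u v, G.Adj u v → w u v + w v u = 2) :
    ∑ v, ∑ u ∈ G.neighborFinset v, w v u = ∑ v, G.degree v := by
  have hswap :
      ∑ v, ∑ u ∈ G.neighborFinset v, w v u = ∑ v, ∑ u ∈ G.neighborFinset v, w u v := by
    simp only [neighborFinset_eq_filter, sum_filter]
    rw [sum_comm]
    simp only [G.adj_comm]
  have htwice : 2 * ∑ v, ∑ u ∈ G.neighborFinset v, w v u = 2 * ∑ v, G.degree v := by
    calc 2 * ∑ v, ∑ u ∈ G.neighborFinset v, w v u
        = ∑ v, ∑ u ∈ G.neighborFinset v, (w v u + w u v) := by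
          rw [two_mul]; nth_rw 2 [hswap]; simp only [← sum_add_distrib]
      _ = ∑ v, ∑ _u ∈ G.neighborFinset v, 2 :=
          sum_congr rfl fun v _ =>
            sum_congr rfl fun u hu => hw v u ((G.mem_neighborFinset _ _).1 hu)
      _ = 2 * ∑ v, G.degree v := by simp [mul_sum, mul_comm]
  omega

theorem exists_adj_lt_degree_two_le_degree_of_mul_card_lt {k : ℕ} (hk : 2 ≤ k)
    (h : k * Fintype.card V < 2 * #G.edgeFinset) :
    ∃ X Y, G.Adj X Y ∧ k < G.degree X ∧ 2 ≤ G.degree Y := by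
  by_contra! hno
  -- each vertex is charged `1` per incident edge, except that an edge from a vertex of degree
  -- `> k` to a leaf is charged `2` to the leaf; then nobody is charged more than `k`
  let w u v := if k < G.degree u then 0 else if k < G.degree v then 2 else 1
  have hw : ∀ u v, G.Adj u v → w u v + w v u = 2 := fun u v huv => by
    have := hno u v huv; have := hno v u huv.symm
    simp only [w]; split_ifs <;> omega
  have hcharge : ∀ v, ∑ u ∈ G.neighborFinset v, w v u ≤ k := by
    intro v
    by_cases hv : k < G.degree v
    · simp [w, hv]
    by_cases hleaf : G.degree v ≤ 1
    · calc ∑ u ∈ G.neighborFinset v, w v u ≤ ∑ _u ∈ G.neighborFinset v, 2 :=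
            sum_le_sum fun u _ => by simp only [w]; split_ifs <;> omega
        _ ≤ k := by simp only [sum_const, card_neighborFinset_eq_degree, smul_eq_mul]; omega
    · calc ∑ u ∈ G.neighborFinset v, w v u = ∑ _u ∈ G.neighborFinset v, 1 :=
            sum_congr rfl fun u hu => by
              have := hno u v ((G.mem_neighborFinset _ _).1 hu).symm
              simp only [w]; split_ifs <;> omega
        _ ≤ k := by
          simp only [sum_const, card_neighborFinset_eq_degree, smul_eq_mul, mul_one]; omega
  have := sum_le_sum fun v (_ : v ∈ univ) => hcharge v
  rw [sum_sum_neighborFinset_eq_sum_degrees hw, sum_degrees_eq_twice_card_edges] at this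
  simp only [sum_const, card_univ, smul_eq_mul] at this
  lia

end Discharging

section RoundRobin

variable {m : ℕ}

/-- The round-robin `1`-factorization of `K_{m+1}`, on `ZMod m` plus the point `none` at
infinity. -/
def roundRobin (m : ℕ) : Option (ZMod m) → Option (ZMod m) → ZMod m
  | some a, some b => a + b
  | some a, none => 2 * a
  | none, some b => 2 * b
  | none, none => 0

theorem roundRobin_comm (x y : Option (ZMod m)) : roundRobin m x y = roundRobin m y x := by
  rcases x with _ | a <;> rcases y with _ | b <;> simp [roundRobin, add_comm]

theorem roundRobin_injective (hm : Odd m) {a x y : Option (ZMod m)} (hx : x ≠ a) (hy : y ≠ a)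
    (h : roundRobin m a x = roundRobin m a y) : x = y := by
  have h2 : IsUnit (2 : ZMod m) := by
    simpa using (ZMod.isUnit_iff_coprime 2 m).2 (Nat.coprime_two_left.2 hm)
  rcases a with _ | a <;> rcases x with _ | x <;> rcases y with _ | y <;>
    simp only [roundRobin, ne_eq, not_true_eq_false, reduceCtorEq, not_false_eq_true,
      Option.some.injEq, add_right_inj] at h hx hy ⊢
  · exact h2.mul_left_cancel h
  · exact hy (add_left_cancel (h.symm.trans (two_mul a)))
  · exact hx (add_left_cancel (h.trans (two_mul a)))
  · exact h

end RoundRobin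

section CliqueUnion

variable {V B : Type*} {m : ℕ} (e : V ≃ Option (ZMod m) × B)

def cliqueUnion : SimpleGraph V where
  Adj u v := u ≠ v ∧ (e u).2 = (e v).2
  symm := ⟨fun _ _ h => ⟨h.1.symm, h.2.symm⟩⟩
  loopless := ⟨fun _ h => h.1 rfl⟩

def cliqueUnionColoring : Sym2 V → ℕ :=
  Sym2.lift ⟨fun u v => (roundRobin m (e u).1 (e v).1).val,
    fun _ _ => congrArg ZMod.val (roundRobin_comm _ _)⟩

theorem cliqueUnion_adj_trans {x y z : V} (hxy : (cliqueUnion e).Adj x y)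
    (hyz : (cliqueUnion e).Adj y z) (hxz : x ≠ z) : (cliqueUnion e).Adj x z :=
  ⟨hxz, hxy.2.trans hyz.2⟩

theorem cliqueUnionColoring_lt [NeZero m] (f : Sym2 V) : cliqueUnionColoring e f < m := by
  induction f using Sym2.ind with
  | h u v => exact ZMod.val_lt _

theorem isProperEdgeColoring_cliqueUnion (hm : Odd m) :
    IsProperEdgeColoring (cliqueUnion e) (cliqueUnionColoring e) := by
  have : NeZero m := ⟨hm.pos.ne'⟩
  refine isProperEdgeColoring_iff.2 fun v a b hva hvb hab h => hab ?_
  have hne {w} (hvw : (cliqueUnion e).Adj v w) : (e w).1 ≠ (e v).1 := fun h =>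
    hvw.1 (e.injective (Prod.ext h.symm hvw.2))
  refine e.injective (Prod.ext ?_ (hva.2.symm.trans hvb.2))
  exact roundRobin_injective hm (hne hva) (hne hvb) (ZMod.val_injective _ h)

theorem two_mul_ncard_edgeSet_cliqueUnion [Fintype V] [NeZero m] :
    2 * (cliqueUnion e).edgeSet.ncard = m * Fintype.card V := by
  classical
  have hdeg (v : V) : (cliqueUnion e).degree v = m := by
    have hnbr : (cliqueUnion e).neighborFinset v
        = ((univ ×ˢ {(e v).2}).map e.symm.toEmbedding).erase v := by
      ext u
      rw [mem_neighborFinset]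
      simp [cliqueUnion, Prod.ext_iff, eq_comm (a := u)]
    rw [← card_neighborFinset_eq_degree, hnbr, card_erase_of_mem (by simp), card_map,
      card_product]
    simp
  rw [← coe_edgeFinset, Set.ncard_coe_finset, ← sum_degrees_eq_twice_card_edges]
  simp [hdeg, mul_comm]

end CliqueUnion

/-- `ex⋆(n, DS_{1,2s+1}) = (2s+3)n/2 + o(1)`: for `(2s+4) ∣ n` there
is an `n`-vertex graph with exactly `(2s+3)n/2` edges and a proper edge coloring
with no rainbow `DS_{1,2s+1}`; and every `n`-vertex graph with more than
`(2s+3)n/2` edges forces a rainbow `DS_{1,2s+1}` in every proper edge coloring. -/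
theorem rainbow_turan_DS1odd (s : ℕ) :
    (∀ n : ℕ, (2 * s + 4) ∣ n → ∃ (G : SimpleGraph (Fin n)) (c : Sym2 (Fin n) → ℕ),
      G.edgeSet.ncard = (2 * s + 3) * n / 2 ∧ IsProperEdgeColoring G c ∧
      ¬ ContainsRainbowCopy (doubleStar 1 (2 * s + 1)) G c) ∧
    (∀ (n : ℕ) (G : SimpleGraph (Fin n)), (2 * s + 3) * n < 2 * G.edgeSet.ncard →
      ∀ c : Sym2 (Fin n) → ℕ, IsProperEdgeColoring G c →
        ContainsRainbowCopy (doubleStar 1 (2 * s + 1)) G c) := by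
  constructor
  · rintro n ⟨t, rfl⟩
    let e : Fin ((2 * s + 4) * t) ≃ Option (ZMod (2 * s + 3)) × Fin t :=
      Fintype.equivOfCardEq (by simp [ZMod.card])
    have hproper := isProperEdgeColoring_cliqueUnion e ⟨s + 1, by ring⟩
    refine ⟨cliqueUnion e, cliqueUnionColoring e, ?_, hproper,
      not_containsRainbowCopy_doubleStar_one hproper (fun f _ => cliqueUnionColoring_lt e f)
        (fun _ _ _ => cliqueUnion_adj_trans e)⟩
    have := two_mul_ncard_edgeSet_cliqueUnion e
    rw [Fintype.card_fin] at this
    omega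
  · intro n G hE c hc
    classical
    rw [← coe_edgeFinset, Set.ncard_coe_finset] at hE
    obtain ⟨X, Y, hXY, hX, hY⟩ := exists_adj_lt_degree_two_le_degree_of_mul_card_lt
      (by omega : 2 ≤ 2 * s + 3) (by rwa [Fintype.card_fin])
    exact containsRainbowCopy_doubleStar_one_of_adj hc hXY hX hY
end

section
/- Let c_1, c_2, c_3 be natural numbers. Every proper edge coloring of the caterpillar C_{c_1+1, c_1+c_2, c_1+c_2+c_3+1} contains a rainbow copy of the caterpillar C_{c_1, c_2, c_3}. -/
open SimpleGraph

/-!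
The copy is chosen greedily, one vertex of the spine at a time. The two spine edges get
distinct colours. At `x₁` at most one of the `c₁ + 1` leaf colours is the colour of `x₂x₃`,
so `c₁` leaves avoid both spine colours. At `x₂` the leaf colours avoid the spine anyway,
and at most `c₁` of the `c₁ + c₂` of them were used at `x₁`. At `x₃` the leaf colours avoid
`x₂x₃`, and at most `1 + c₁ + c₂` of the `c₁ + c₂ + c₃ + 1` of them were used before.
-/

open Function Finset

theorem exists_embedding_sumElim_injective {α ι β : Type*} [Fintype α] [Fintype ι]
    {F : α → β} (hF : Injective F) {h : ι → β} (hh : Injective h) (s : Finset α)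
    (hs : ∀ i, ∀ a ∈ s, h i ≠ F a) {k : ℕ}
    (hk : k + Fintype.card α ≤ Fintype.card ι + #s) :
    ∃ g : Fin k ↪ ι, Injective (Sum.elim F (h ∘ g)) := by
  classical
  have hstale : #(univ.filter fun i => h i ∈ Set.range F) ≤ #sᶜ := by
    refine (card_le_card_of_injOn (t := sᶜ.image F) h ?_ hh.injOn).trans card_image_le
    rintro i hi
    obtain ⟨a, ha⟩ := (mem_filter.1 hi).2
    exact mem_image.2 ⟨a, mem_compl.2 fun has => hs i a has ha.symm, ha⟩
  have hfresh : k ≤ #(univ.filter fun i => h i ∉ Set.range F) := by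
    have hsplit := card_filter_add_card_filter_not (s := univ) fun i => h i ∈ Set.range F
    rw [card_compl] at hstale
    rw [card_univ] at hsplit
    have := card_le_univ s
    omega
  set fresh := univ.filter fun i => h i ∉ Set.range F
  let g : Fin k ↪ ι :=
    (Fin.castLEEmb hfresh).trans (fresh.equivFin.symm.toEmbedding.trans (Embedding.subtype _))
  have hg : ∀ i, h (g i) ∉ Set.range F := fun i => (mem_filter.1 (fresh.equivFin.symm _).2).2
  exact ⟨g, hF.sumElim (hh.comp g.injective) fun a i hai => hg i ⟨a, hai⟩⟩

theorem containsRainbowCopy_of_map_edge {W V ι ι' : Type*} {H : SimpleGraph W}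
    {G : SimpleGraph V} {col : Sym2 V → ℕ} {E : ι → Sym2 W} {E' : ι' → Sym2 V}
    (hE : Set.range E = H.edgeSet) (hE' : ∀ j, E' j ∈ G.edgeSet) {f : W → V}
    (hf : Injective f) {σ : ι → ι'} (hσ : ∀ j, (E j).map f = E' (σ j))
    (hcol : Injective (col ∘ E' ∘ σ)) :
    ContainsRainbowCopy H G col := by
  refine ⟨f, ⟨hf, fun x y hxy => ?_⟩, ?_⟩
  · obtain ⟨j, hj⟩ : s(x, y) ∈ Set.range E := hE ▸ hxy
    have := hE' (σ j)
    rwa [← hσ, hj, Sym2.map_mk, SimpleGraph.mem_edgeSet] at this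
  · rw [← hE]
    rintro _ ⟨j, rfl⟩ _ ⟨j', rfl⟩ hne heq
    rw [hσ, hσ] at heq
    exact hne (congrArg E (hcol heq))

namespace caterpillar3

variable {a b c : ℕ}

/-- The index type is nested to the left so that the greedy choice adds one group of edges
at a time. -/
def edge : ((Fin 2 ⊕ Fin a) ⊕ Fin b) ⊕ Fin c → Sym2 (Fin 3 ⊕ Fin a ⊕ Fin b ⊕ Fin c)
  | .inl (.inl (.inl k)) => s(.inl k.castSucc, .inl k.succ)
  | .inl (.inl (.inr i)) => s(.inl 0, .inr (.inl i))
  | .inl (.inr i) => s(.inl 1, .inr (.inr (.inl i)))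
  | .inr i => s(.inl 2, .inr (.inr (.inr i)))

theorem range_edge :
    Set.range (edge (a := a) (b := b) (c := c)) = (caterpillar3 a b c).edgeSet := by
  ext e
  simp only [caterpillar3, edgeSet_fromEdgeSet]
  constructor
  · rintro ⟨(((k | i) | i) | i), rfl⟩ <;> [fin_cases k; skip; skip; skip] <;> simp [edge]
  · rintro ⟨(((h | h) | ⟨i, rfl⟩) | ⟨i, rfl⟩) | ⟨i, rfl⟩, -⟩
    exacts [⟨.inl (.inl (.inl 0)), h.symm⟩, ⟨.inl (.inl (.inl 1)), h.symm⟩,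
      ⟨.inl (.inl (.inr i)), rfl⟩, ⟨.inl (.inr i), rfl⟩, ⟨.inr i, rfl⟩]

theorem edge_mem_edgeSet (j : ((Fin 2 ⊕ Fin a) ⊕ Fin b) ⊕ Fin c) :
    edge j ∈ (caterpillar3 a b c).edgeSet :=
  range_edge ▸ ⟨j, rfl⟩

theorem edge_injective : Injective (edge (a := a) (b := b) (c := c)) := by
  rintro (((k | i) | i) | i) (((k' | i') | i') | i') h <;>
    simp only [edge, Sym2.eq_iff, Sum.inl.injEq, Sum.inr.injEq, reduceCtorEq] at h
  case inl.inl.inl.inl.inl.inl =>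
    simp only [Fin.ext_iff, Fin.val_castSucc, Fin.val_succ, Sum.inl.injEq] at h ⊢
    omega
  all_goals simp_all

theorem map_edge {a' b' c' : ℕ} (g₁ : Fin a → Fin a') (g₂ : Fin b → Fin b')
    (g₃ : Fin c → Fin c') (j : ((Fin 2 ⊕ Fin a) ⊕ Fin b) ⊕ Fin c) :
    (edge j).map (Sum.map id (Sum.map g₁ (Sum.map g₂ g₃))) =
      edge (Sum.map (Sum.map (Sum.map id g₁) g₂) g₃ j) := by
  rcases j with ((k | i) | i) | i <;> rfl

theorem _root_.IsProperEdgeColoring.caterpillar3_edge_ne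
    {col : Sym2 (Fin 3 ⊕ Fin a ⊕ Fin b ⊕ Fin c) → ℕ}
    (hc : IsProperEdgeColoring (caterpillar3 a b c) col) {j j'} (u) (hu : u ∈ edge j)
    (hu' : u ∈ edge j') (hne : j ≠ j') : col (edge j) ≠ col (edge j') :=
  hc _ (edge_mem_edgeSet j) _ (edge_mem_edgeSet j') (edge_injective.ne hne) ⟨u, hu, hu'⟩

theorem exists_leaf_embeddings_injective {c₁ c₂ c₃ : ℕ} {β : Type*}
    (κ : ((Fin 2 ⊕ Fin (c₁ + 1)) ⊕ Fin (c₁ + c₂)) ⊕ Fin (c₁ + c₂ + c₃ + 1) → β)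
    (hκ : ∀ {j j'} u, u ∈ edge j → u ∈ edge j' → j ≠ j' → κ j ≠ κ j') :
    ∃ (g₁ : Fin c₁ ↪ Fin (c₁ + 1)) (g₂ : Fin c₂ ↪ Fin (c₁ + c₂))
      (g₃ : Fin c₃ ↪ Fin (c₁ + c₂ + c₃ + 1)),
      Injective (κ ∘ Sum.map (Sum.map (Sum.map id g₁) g₂) g₃) := by
  have star : ∀ (u) {ι : Type} {e : ι → _}, Injective e → (∀ i, u ∈ edge (e i)) →
      Injective (κ ∘ e) :=
    fun u _ _ he hu i i' => not_imp_not.1 fun hne => hκ u (hu i) (hu i') (he.ne hne)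
  have hx₂ : ∀ k, .inl 1 ∈ edge (a := c₁ + 1) (b := c₁ + c₂) (c := c₁ + c₂ + c₃ + 1)
      (.inl (.inl (.inl k))) := by
    intro k
    fin_cases k <;> simp [edge]
  obtain ⟨g₁, h₁⟩ := exists_embedding_sumElim_injective (k := c₁)
    (star _ (e := .inl ∘ .inl ∘ .inl) (fun _ _ h => by simpa using h) hx₂)
    (star (.inl 0) (e := .inl ∘ .inl ∘ .inr) (fun _ _ h => by simpa using h) (by simp [edge]))
    {0}
    (fun i k hk => by
      rw [mem_singleton.1 hk]
      exact hκ (.inl 0) (by simp [edge]) (by simp [edge]) (by simp))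
    (by simp)
  obtain ⟨g₂, h₂⟩ := exists_embedding_sumElim_injective h₁ (k := c₂)
    (star (.inl 1) (e := .inl ∘ .inr) (fun _ _ h => by simpa using h) (by simp [edge]))
    (univ.map .inl)
    (fun i k hk => by
      obtain ⟨k, -, rfl⟩ := mem_map.1 hk
      exact hκ (.inl 1) (by simp [edge]) (hx₂ k) (by simp))
    (by simp only [Fintype.card_sum, Fintype.card_fin, card_map, card_univ]; omega)
  obtain ⟨g₃, h₃⟩ := exists_embedding_sumElim_injective h₂ (k := c₃)
    (star (.inl 2) (e := .inr) Sum.inr_injective (by simp [edge]))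
    {.inl (.inl 1)}
    (fun i k hk => by
      rw [mem_singleton.1 hk]
      exact hκ (.inl 2) (by simp [edge]) (by simp [edge]) (by simp))
    (by simp only [Fintype.card_sum, Fintype.card_fin, card_singleton]; omega)
  refine ⟨g₁, g₂, g₃, ?_⟩
  convert h₃ using 1
  funext j
  rcases j with ((k | i) | i) | i <;> rfl

end caterpillar3

/-- Every proper edge coloring of the caterpillar
`C_{c₁+1, c₁+c₂, c₁+c₂+c₃+1}` contains a rainbow copy of the caterpillar
`C_{c₁, c₂, c₃}`. -/
theorem caterpillar_aug_rainbow (c₁ c₂ c₃ : ℕ)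
    (c : Sym2 (Fin 3 ⊕ Fin (c₁ + 1) ⊕ Fin (c₁ + c₂) ⊕ Fin (c₁ + c₂ + c₃ + 1)) → ℕ)
    (hc : IsProperEdgeColoring (caterpillar3 (c₁ + 1) (c₁ + c₂) (c₁ + c₂ + c₃ + 1)) c) :
    ContainsRainbowCopy (caterpillar3 c₁ c₂ c₃)
      (caterpillar3 (c₁ + 1) (c₁ + c₂) (c₁ + c₂ + c₃ + 1)) c := by
  obtain ⟨g₁, g₂, g₃, hinj⟩ :=
    caterpillar3.exists_leaf_embeddings_injective (c ∘ caterpillar3.edge)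
      hc.caterpillar3_edge_ne
  have hf : Injective (Sum.map (id : Fin 3 → Fin 3) (Sum.map g₁ (Sum.map g₂ g₃))) :=
    injective_id.sumMap (g₁.injective.sumMap (g₂.injective.sumMap g₃.injective))
  exact containsRainbowCopy_of_map_edge caterpillar3.range_edge caterpillar3.edge_mem_edgeSet hf
    (caterpillar3.map_edge g₁ g₂ g₃) hinj
end

section
/- Let k ≥ 2 be a natural number. Let T'(k,2) be the rooted tree of depth 2 consisting of a root with k children, each of which has exactly k^2 + k − 1 pendant leaves. Then every proper edge coloring of T'(k,2) contains a rainbow copy of the perfect k-ary tree T(k,2) of depth 2 (the rooted tree whose root has k children, each of which has exactly k leaf children). -/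
open SimpleGraph

/-!
Greedy choice of leaves. In a proper colouring the `k` root edges get distinct colours, and the
`m` leaf edges at child `i` get distinct colours, none equal to the colour of the root edge at `i`;
so at most `k - 1` of them repeat a root colour. Treating the children one at a time, at most
`(k - 1) n` further leaf colours at child `i` are already used by the `n` leaves chosen at each
earlier child, hence `n` fresh colours remain as soon as `k n + k ≤ m + 1`. For `n = k` and
`m = k² + k - 1` this is an equality.
-/

open Finset

theorem Finset.exists_pairwiseDisjoint_subset_card_eq {ι β : Type*} [DecidableEq ι]
    [DecidableEq β] (s : Finset ι) (C : ι → Finset β) (n : ℕ)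
    (hC : ∀ i ∈ s, #s * n ≤ #(C i)) :
    ∃ D : ι → Finset β, (∀ i ∈ s, D i ⊆ C i ∧ #(D i) = n) ∧ (s : Set ι).PairwiseDisjoint D := by
  induction s using Finset.induction_on with
  | empty => exact ⟨fun _ => ∅, by simp, by simp⟩
  | insert a s ha ih =>
    rw [card_insert_of_notMem ha, Nat.succ_mul] at hC
    obtain ⟨D, hD, hDdisj⟩ :=
      ih fun i hi => (Nat.le_add_right _ _).trans (hC i (mem_insert_of_mem hi))
    have hfree : n ≤ #(C a \ s.biUnion D) := by
      have := card_biUnion_le_card_mul s D n fun i hi => (hD i hi).2.le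
      have := le_card_sdiff (s.biUnion D) (C a)
      have := hC a (mem_insert_self a s)
      omega
    obtain ⟨Da, hDa_sub, hDa_card⟩ := exists_subset_card_eq hfree
    have hupdate : ∀ i ∈ s, Function.update D a Da i = D i := fun i hi =>
      Function.update_of_ne (ne_of_mem_of_not_mem hi ha) _ _
    refine ⟨Function.update D a Da, fun i hi => ?_, ?_⟩
    · rcases mem_insert.1 hi with rfl | hi
      · simpa using ⟨hDa_sub.trans sdiff_subset, hDa_card⟩
      · exact hupdate i hi ▸ hD i hi
    · rw [coe_insert, Set.pairwiseDisjoint_insert_of_notMem (by simpa using ha)]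
      refine ⟨fun i hi j hj hij => ?_, fun j hj => ?_⟩
      · simpa [Function.onFun, hupdate i hi, hupdate j hj] using hDdisj hi hj hij
      · simpa [hupdate j hj] using disjoint_of_subset_left hDa_sub
          (disjoint_sdiff_self_left.mono_right (subset_biUnion_of_mem D hj))

lemma IsProperEdgeColoring.apply_ne {V : Type*} {G : SimpleGraph V} {c : Sym2 V → ℕ}
    (hc : IsProperEdgeColoring G c) {u v w : V} (hv : G.Adj u v) (hw : G.Adj u w)
    (hvw : v ≠ w) : c s(u, v) ≠ c s(u, w) :=
  hc _ hv _ hw (Sym2.congr_right.not.2 hvw) ⟨u, Sym2.mem_mk_left u v, Sym2.mem_mk_left u w⟩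

section depth2Tree

variable {k m n : ℕ}

def depth2TreeEdge (k m : ℕ) : Fin k ⊕ Fin k × Fin m → Sym2 (Unit ⊕ Fin k ⊕ Fin k × Fin m)
  | .inl i => s(.inl (), .inr (.inl i))
  | .inr p => s(.inr (.inl p.1), .inr (.inr p))

lemma depth2Tree_edgeSet : (depth2Tree k m).edgeSet = Set.range (depth2TreeEdge k m) := by
  ext e
  simp only [depth2Tree, edgeSet_fromEdgeSet, Set.mem_sdiff, Set.mem_union, Set.mem_ofPred_eq,
    Set.mem_range, Sum.exists, Prod.exists, depth2TreeEdge]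
  constructor
  · rintro ⟨⟨i, rfl⟩ | ⟨i, j, rfl⟩, -⟩
    · exact .inl ⟨i, rfl⟩
    · exact .inr ⟨i, j, rfl⟩
  · rintro (⟨i, rfl⟩ | ⟨i, j, rfl⟩)
    · exact ⟨.inl ⟨i, rfl⟩, by simp⟩
    · exact ⟨.inr ⟨i, j, rfl⟩, by simp⟩

lemma depth2TreeEdge_mem_edgeSet (x : Fin k ⊕ Fin k × Fin m) :
    depth2TreeEdge k m x ∈ (depth2Tree k m).edgeSet :=
  depth2Tree_edgeSet ▸ Set.mem_range_self x

lemma depth2Tree_adj_root (i : Fin k) : (depth2Tree k m).Adj (.inl ()) (.inr (.inl i)) :=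
  depth2TreeEdge_mem_edgeSet (.inl i)

lemma depth2Tree_adj_leaf (i : Fin k) (j : Fin m) :
    (depth2Tree k m).Adj (.inr (.inl i)) (.inr (.inr (i, j))) :=
  depth2TreeEdge_mem_edgeSet (.inr (i, j))

variable {c : Sym2 (Unit ⊕ Fin k ⊕ Fin k × Fin m) → ℕ}

lemma IsProperEdgeColoring.injective_depth2Tree_root
    (hc : IsProperEdgeColoring (depth2Tree k m) c) :
    Function.Injective fun i => c (depth2TreeEdge k m (.inl i)) := fun i i' h => by
  by_contra hne
  exact hc.apply_ne (depth2Tree_adj_root i) (depth2Tree_adj_root i') (by simpa using hne) h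

lemma IsProperEdgeColoring.injective_depth2Tree_leaf
    (hc : IsProperEdgeColoring (depth2Tree k m) c) (i : Fin k) :
    Function.Injective fun j => c (depth2TreeEdge k m (.inr (i, j))) := fun j j' h => by
  by_contra hne
  exact hc.apply_ne (depth2Tree_adj_leaf i j) (depth2Tree_adj_leaf i j') (by simpa using hne) h

lemma IsProperEdgeColoring.depth2Tree_root_ne_leaf
    (hc : IsProperEdgeColoring (depth2Tree k m) c) (i : Fin k) (j : Fin m) :
    c (depth2TreeEdge k m (.inl i)) ≠ c (depth2TreeEdge k m (.inr (i, j))) := by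
  rw [depth2TreeEdge, Sym2.eq_swap]
  exact hc.apply_ne (depth2Tree_adj_root i).symm (depth2Tree_adj_leaf i j) (by simp)

lemma IsProperEdgeColoring.depth2Tree_card_leafColors_sdiff
    (hc : IsProperEdgeColoring (depth2Tree k m) c) (i : Fin k) :
    m + 1 ≤ #((univ.image fun j => c (depth2TreeEdge k m (.inr (i, j)))) \
      univ.image fun i' => c (depth2TreeEdge k m (.inl i'))) + k := by
  set L := univ.image fun j => c (depth2TreeEdge k m (.inr (i, j)))
  set R := univ.image fun i' => c (depth2TreeEdge k m (.inl i'))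
  have hL : #L = m := by simp [L, card_image_of_injective _ (hc.injective_depth2Tree_leaf i)]
  have hR : #R = k := by simp [R, card_image_of_injective _ hc.injective_depth2Tree_root]
  have hRL : R ∩ L ⊆ R.erase (c (depth2TreeEdge k m (.inl i))) := fun x hx => by
    obtain ⟨hxR, hxL⟩ := mem_inter.1 hx
    obtain ⟨j, -, rfl⟩ := mem_image.1 hxL
    exact mem_erase.2 ⟨(hc.depth2Tree_root_ne_leaf i j).symm, hxR⟩
  have hcommon := card_le_card hRL
  rw [card_erase_of_mem (mem_image_of_mem _ (mem_univ i)), hR] at hcommon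
  rw [card_sdiff, hL]
  have := i.pos
  omega

lemma depth2Tree_containsRainbowCopy_of_injective (g : Fin k → Fin n → Fin m)
    (hg : Function.Injective fun x : Fin k ⊕ Fin k × Fin n =>
      c (depth2TreeEdge k m (x.map id fun p => (p.1, g p.1 p.2)))) :
    ContainsRainbowCopy (depth2Tree k n) (depth2Tree k m) c := by
  set σ : Fin k × Fin n → Fin k × Fin m := fun p => (p.1, g p.1 p.2)
  have hσ : Function.Injective σ := fun p q h =>
    Sum.inr_injective (hg (congrArg (fun q => c (depth2TreeEdge k m (.inr q))) h))
  set f := Sum.map id (Sum.map id σ)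
  have hf : ∀ x, (depth2TreeEdge k n x).map f = depth2TreeEdge k m (x.map id σ) := by
    rintro (i | p) <;> rfl
  refine ⟨f, ⟨Function.injective_id.sumMap (Function.injective_id.sumMap hσ),
    fun a b hab => ?_⟩, ?_⟩
  · rw [← mem_edgeSet, depth2Tree_edgeSet] at hab
    obtain ⟨x, hx⟩ := hab
    have := depth2TreeEdge_mem_edgeSet (x.map id σ)
    rwa [← hf, hx] at this
  · rw [depth2Tree_edgeSet]
    rintro _ ⟨x, rfl⟩ _ ⟨y, rfl⟩ hxy
    rw [hf, hf]
    exact hg.ne (ne_of_apply_ne _ hxy)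

theorem IsProperEdgeColoring.depth2Tree_containsRainbowCopy (hm : k * n + k ≤ m + 1)
    (hc : IsProperEdgeColoring (depth2Tree k m) c) :
    ContainsRainbowCopy (depth2Tree k n) (depth2Tree k m) c := by
  set R := univ.image fun i => c (depth2TreeEdge k m (.inl i))
  set C := fun i => (univ.image fun j => c (depth2TreeEdge k m (.inr (i, j)))) \ R
  obtain ⟨D, hD, hDdisj⟩ := exists_pairwiseDisjoint_subset_card_eq univ C n fun i _ => by
    have := hc.depth2Tree_card_leafColors_sdiff i
    simp only [C, R, card_univ, Fintype.card_fin]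
    omega
  let e i : Fin n ≃o D i := (D i).orderIsoOfFin (hD i (mem_univ i)).2
  have he i j : (e i j : ℕ) ∈ C i := (hD i (mem_univ i)).1 (e i j).2
  have hleaf i j : ∃ l, c (depth2TreeEdge k m (.inr (i, l))) = e i j := by
    obtain ⟨l, -, hl⟩ := mem_image.1 (mem_sdiff.1 (he i j)).1
    exact ⟨l, hl⟩
  choose g hg using hleaf
  refine depth2Tree_containsRainbowCopy_of_injective g ?_
  rintro (i | ⟨i, j⟩) (i' | ⟨i', j'⟩) h <;>
    simp only [Sum.map_inl, Sum.map_inr, id, hg] at h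
  · exact congrArg _ (hc.injective_depth2Tree_root h)
  · exact ((mem_sdiff.1 (he i' j')).2 (h ▸ mem_image_of_mem _ (mem_univ i))).elim
  · exact ((mem_sdiff.1 (he i j)).2 (h ▸ mem_image_of_mem _ (mem_univ i'))).elim
  · obtain rfl | hii := eq_or_ne i i'
    · rw [(e i).injective (Subtype.ext h)]
    · exact (disjoint_left.1 (hDdisj (mem_coe.2 (mem_univ i)) (mem_coe.2 (mem_univ i')) hii)
        (e i j).2 (h ▸ (e i' j').2)).elim

end depth2Tree

theorem kary_aug_rainbow_general (k : ℕ)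
    (c : Sym2 (Unit ⊕ Fin k ⊕ Fin k × Fin (k ^ 2 + k - 1)) → ℕ)
    (hc : IsProperEdgeColoring (depth2Tree k (k ^ 2 + k - 1)) c) :
    ContainsRainbowCopy (depth2Tree k k) (depth2Tree k (k ^ 2 + k - 1)) c :=
  hc.depth2Tree_containsRainbowCopy (by rw [sq]; omega)

/-- For `k ≥ 2`, every proper edge coloring of the depth-2 tree
`T'(k,2)` (root with `k` children, each with `k² + k − 1` pendant leaves) contains a
rainbow copy of the perfect `k`-ary tree `T(k,2)` of depth 2. -/
theorem kary_aug_rainbow (k : ℕ) (hk : 2 ≤ k)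
    (c : Sym2 (Unit ⊕ Fin k ⊕ Fin k × Fin (k ^ 2 + k - 1)) → ℕ)
    (hc : IsProperEdgeColoring (depth2Tree k (k ^ 2 + k - 1)) c) :
    ContainsRainbowCopy (depth2Tree k k) (depth2Tree k (k ^ 2 + k - 1)) c :=
  kary_aug_rainbow_general k c hc
end
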